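/- For every function δ₀ : ℝ → ℝ mapping (0,2] into (0,1] there exists a constant r₁ with 0 ≤ r₁ < 1 such that: for every real Banach space E for which δ₀ is a modulus of uniform convexity, every triple U, V, W of invertible linear isometries of E satisfying the Heisenberg relations, every n ∈ ℕ with n ≥ 2, and every ξ ∈ E, one has ‖ X₀ ∘ Y^n ∘ (I − Z₀) ξ ‖ ≤ max{ r₁·‖(I − Z₀)ξ‖, (1/2)^{n−2}·‖ξ‖ }, where X₀ = (I + U)/2, Y^n = 2^{−n} ∑_{b=0}^{2^n−1} V^b, and Z₀ = (I + W)/2. -/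

import Mathlib

/-- `δ : ℝ → ℝ` is a *modulus of uniform convexity* for `E`: it maps `(0,2]` into `(0,1]` and
for every `ε ∈ (0,2]` and all unit vectors `ξ, η` with `‖ξ - η‖ ≥ ε` one has
`‖(ξ + η)/2‖ ≤ 1 - δ ε`. -/
def IsUCModulus (E : Type*) [NormedAddCommGroup E] [NormedSpace ℝ E] (δ : ℝ → ℝ) : Prop :=
  (∀ ε : ℝ, 0 < ε → ε ≤ 2 → 0 < δ ε ∧ δ ε ≤ 1) ∧
    ∀ ε : ℝ, 0 < ε → ε ≤ 2 → ∀ ξ η : E, ‖ξ‖ = 1 → ‖η‖ = 1 → ε ≤ ‖ξ - η‖ →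
      ‖(2⁻¹ : ℝ) • (ξ + η)‖ ≤ 1 - δ ε

/-- `U, V, W` satisfy the Heisenberg relations `W = U⁻¹V⁻¹UV`, `UW = WU`, `VW = WV`
(the multiplication on `E ≃ₗᵢ[ℝ] E` is composition, `(e₁ * e₂) x = e₁ (e₂ x)`). -/
def HeisenbergRel {E : Type*} [NormedAddCommGroup E] [NormedSpace ℝ E]
    (U V W : E ≃ₗᵢ[ℝ] E) : Prop :=
  W = U⁻¹ * V⁻¹ * U * V ∧ U * W = W * U ∧ V * W = W * V

/-- The bounded operator on `E` underlying an invertible linear isometry. -/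
noncomputable def isomCLM {E : Type*} [NormedAddCommGroup E] [NormedSpace ℝ E]
    (U : E ≃ₗᵢ[ℝ] E) : E →L[ℝ] E :=
  U.toLinearIsometry.toContinuousLinearMap

/-- The averaging operator `2^{-d} ∑_{a=0}^{2^d - 1} U^a`. -/
noncomputable def avgOp {E : Type*} [NormedAddCommGroup E] [NormedSpace ℝ E]
    (U : E ≃ₗᵢ[ℝ] E) (d : ℕ) : E →L[ℝ] E :=
  ((2 : ℝ) ^ d)⁻¹ • ∑ a ∈ Finset.range (2 ^ d), isomCLM (U ^ a)


/-!
Write `ζ = (I - Z₀)ξ = (ξ - Wξ)/2`. The relation `U V^b = V^b U W^b` turns `X₀ Y^n ζ` into an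
average over `b < 2^n` of `V^b` applied to the midpoints of `ζ` and `U W^b ζ`, each of norm at most
`‖ζ‖`. If `‖ζ‖ > 2^{2-n}‖ξ‖`, the telescoping sum `∑_{m < 2^{n-1}} W^m ζ = (ξ - W^{2^{n-1}} ξ)/2`
forces some `m < 2^{n-1}` with `‖ζ - W^m ζ‖ ≥ ‖ζ‖/2`. Then for each `b < 2^{n-1}` the vectors
`U W^b ζ` and `U W^{b+m} ζ` are `‖ζ‖/2` apart, so uniform convexity shortens one of the two
midpoints by `δ₀(1/4)‖ζ‖`; summing over these pairs gives `r₁ = 1 - δ₀(1/4)/4`.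
-/

open Finset

/-- Each index below `2 N` occurs at most twice among the pairs `(b, b + m)`, `b < N`. -/
lemma mul_le_two_mul_sum_range_of_le_add {g : ℕ → ℝ} (hg : ∀ i, 0 ≤ g i) {c : ℝ} {m N : ℕ}
    (hm : m ≤ N) (h : ∀ b < N, c ≤ g b + g (b + m)) :
    N * c ≤ 2 * ∑ i ∈ range (2 * N), g i := by
  have hleft : ∑ b ∈ range N, g b ≤ ∑ i ∈ range (2 * N), g i :=
    sum_le_sum_of_subset_of_nonneg (range_subset_range.2 (by omega)) fun i _ _ ↦ hg i
  have hright : ∑ b ∈ range N, g (b + m) ≤ ∑ i ∈ range (2 * N), g i := by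
    refine (sum_map (range N) (addRightEmbedding m) g).symm.trans_le ?_
    refine sum_le_sum_of_subset_of_nonneg ?_ fun i _ _ ↦ hg i
    intro i hi
    simp only [mem_map, mem_range, addRightEmbedding_apply] at hi ⊢
    omega
  calc (N : ℝ) * c = ∑ b ∈ range N, c := by simp
    _ ≤ ∑ b ∈ range N, (g b + g (b + m)) := sum_le_sum fun b hb ↦ h b (mem_range.1 hb)
    _ ≤ 2 * ∑ i ∈ range (2 * N), g i := by rw [sum_add_distrib]; linarith

section

variable {E : Type*} [NormedAddCommGroup E] [NormedSpace ℝ E] {U V W : E ≃ₗᵢ[ℝ] E} {δ : ℝ → ℝ}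

@[simp]
lemma isomCLM_apply (U : E ≃ₗᵢ[ℝ] E) (x : E) : isomCLM U x = U x := rfl

lemma one_sub_half_smul_one_add_isomCLM_apply (W : E ≃ₗᵢ[ℝ] E) (ξ : E) :
    (1 - (2⁻¹ : ℝ) • (1 + isomCLM W)) ξ = (2⁻¹ : ℝ) • (ξ - W ξ) := by
  simp only [sub_apply, one_apply_eq_self, smul_apply, add_apply, isomCLM_apply]
  module

lemma HeisenbergRel.mul_pow_eq (hH : HeisenbergRel U V W) (b : ℕ) :
    U * V ^ b = V ^ b * (U * W ^ b) := by
  obtain ⟨hW, hUW, hVW⟩ := hH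
  have hconj : U * V * U⁻¹ = V * W :=
    calc U * V * U⁻¹ = V * (U * W) * U⁻¹ := by rw [hW]; group
      _ = V * W := by rw [hUW]; group
  calc U * V ^ b = (U * V * U⁻¹) ^ b * U := by rw [conj_pow]; group
    _ = V ^ b * (W ^ b * U) := by rw [hconj, Commute.mul_pow hVW, mul_assoc]
    _ = V ^ b * (U * W ^ b) := by rw [(Commute.pow_right hUW b).eq]

lemma HeisenbergRel.half_smul_one_add_isomCLM_avgOp_apply (hH : HeisenbergRel U V W) (n : ℕ)
    (ζ : E) :
    ((2⁻¹ : ℝ) • (1 + isomCLM U)) (avgOp V n ζ) =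
      ((2 : ℝ) ^ n)⁻¹ • ∑ b ∈ range (2 ^ n), (V ^ b) ((2⁻¹ : ℝ) • (ζ + (U * W ^ b) ζ)) := by
  have hcomm (b : ℕ) : U ((V ^ b) ζ) = (V ^ b) ((U * W ^ b) ζ) :=
    congrArg (· ζ) (hH.mul_pow_eq b)
  simp only [avgOp, smul_apply, add_apply, one_apply_eq_self, FunLike.coe_sum, Finset.sum_apply,
    isomCLM_apply, map_smul, map_sum, map_add, hcomm, smul_sum]

lemma HeisenbergRel.norm_half_smul_one_add_isomCLM_avgOp_apply_le (hH : HeisenbergRel U V W)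
    (n : ℕ) (ζ : E) :
    ‖((2⁻¹ : ℝ) • (1 + isomCLM U)) (avgOp V n ζ)‖ ≤
      ((2 : ℝ) ^ n)⁻¹ * ∑ b ∈ range (2 ^ n), ‖(2⁻¹ : ℝ) • (ζ + (U * W ^ b) ζ)‖ := by
  rw [hH.half_smul_one_add_isomCLM_avgOp_apply, norm_smul, norm_inv, norm_pow, Real.norm_two]
  gcongr
  refine (norm_sum_le _ _).trans_eq ?_
  simp only [LinearIsometryEquiv.norm_map]

lemma LinearIsometryEquiv.sum_range_pow_apply_sub (W : E ≃ₗᵢ[ℝ] E) (ξ : E) (N : ℕ) :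
    ∑ m ∈ range N, (W ^ m) (ξ - W ξ) = ξ - (W ^ N) ξ := by
  have h (m : ℕ) : (W ^ m) (ξ - W ξ) = (W ^ m) ξ - (W ^ (m + 1)) ξ := by
    rw [map_sub, pow_succ]; rfl
  simp only [h, sum_range_sub', pow_zero, LinearIsometryEquiv.coe_one, id]

lemma LinearIsometryEquiv.exists_half_norm_le_norm_sub_pow_apply (W : E ≃ₗᵢ[ℝ] E) {ξ ζ : E}
    (hζ : ζ = (2⁻¹ : ℝ) • (ξ - W ξ)) {N : ℕ} (hN : 2 * ‖ξ‖ < N * ‖ζ‖) :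
    ∃ m < N, ‖ζ‖ / 2 ≤ ‖ζ - (W ^ m) ζ‖ := by
  by_contra! hsmall
  have hsum : ‖∑ m ∈ range N, (W ^ m) ζ‖ ≤ ‖ξ‖ := by
    simp only [hζ, map_smul, ← smul_sum, W.sum_range_pow_apply_sub, norm_smul, norm_inv,
      Real.norm_two]
    linarith [norm_sub_le ξ ((W ^ N) ξ), (W ^ N).norm_map ξ]
  have hdev : ∑ m ∈ range N, ‖ζ - (W ^ m) ζ‖ ≤ N * (‖ζ‖ / 2) := by
    simpa using sum_le_sum fun m hm ↦ (hsmall m (mem_range.1 hm)).le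
  have htri : N * ‖ζ‖ ≤ ‖∑ m ∈ range N, (W ^ m) ζ‖ + ∑ m ∈ range N, ‖ζ - (W ^ m) ζ‖ :=
    calc (N : ℝ) * ‖ζ‖ = ‖∑ m ∈ range N, (W ^ m) ζ + ∑ m ∈ range N, (ζ - (W ^ m) ζ)‖ := by
          rw [← sum_add_distrib]; simp [← Nat.cast_smul_eq_nsmul ℝ, norm_smul]
      _ ≤ _ := (norm_add_le _ _).trans (by gcongr; exact norm_sum_le _ _)
  linarith


lemma norm_half_smul_add_le (x y : E) : ‖(2⁻¹ : ℝ) • (x + y)‖ ≤ (‖x‖ + ‖y‖) / 2 := by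
  rw [norm_smul, Real.norm_of_nonneg (by norm_num)]
  linarith [norm_add_le x y]

lemma LinearIsometryEquiv.norm_half_smul_add_apply_le (T : E ≃ₗᵢ[ℝ] E) (ζ : E) :
    ‖(2⁻¹ : ℝ) • (ζ + T ζ)‖ ≤ ‖ζ‖ := by
  linarith [norm_half_smul_add_le ζ (T ζ), T.norm_map ζ]

lemma IsUCModulus.norm_half_smul_add_le_of_le_norm_sub (hUC : IsUCModulus E δ) {ε r : ℝ}
    (hε : 0 < ε) (hε2 : ε ≤ 2) {x y : E} (hx : ‖x‖ = r) (hy : ‖y‖ = r)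
    (hxy : ε * r ≤ ‖x - y‖) :
    ‖(2⁻¹ : ℝ) • (x + y)‖ ≤ (1 - δ ε) * r := by
  obtain hr | hr := (hx ▸ norm_nonneg x : 0 ≤ r).eq_or_lt
  · subst hr
    simp_all
  have key := hUC.2 ε hε hε2 (r⁻¹ • x) (r⁻¹ • y)
    (by rw [norm_smul, hx, norm_inv, Real.norm_of_nonneg hr.le, inv_mul_cancel₀ hr.ne'])
    (by rw [norm_smul, hy, norm_inv, Real.norm_of_nonneg hr.le, inv_mul_cancel₀ hr.ne'])
    (by rwa [← smul_sub, norm_smul, norm_inv, Real.norm_of_nonneg hr.le, le_inv_mul_iff₀ hr,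
      mul_comm])
  rwa [← smul_add, smul_comm, norm_smul, norm_inv, Real.norm_of_nonneg hr.le,
    inv_mul_le_iff₀ hr, mul_comm] at key

/-- `x` is at distance at least `ε r` from `y` or from `z`, so uniform convexity applies to one of
the two midpoints. -/
lemma IsUCModulus.norm_half_smul_add_add_norm_half_smul_add_le (hUC : IsUCModulus E δ)
    {ε r : ℝ} (hε : 0 < ε) (hε2 : ε ≤ 2) {x y z : E} (hx : ‖x‖ = r) (hy : ‖y‖ = r)
    (hz : ‖z‖ = r) (hyz : 2 * ε * r ≤ ‖y - z‖) :
    ‖(2⁻¹ : ℝ) • (x + y)‖ + ‖(2⁻¹ : ℝ) • (x + z)‖ ≤ (2 - δ ε) * r := by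
  have htri : ‖y - z‖ ≤ ‖x - y‖ + ‖x - z‖ := by
    simpa [norm_sub_rev y x] using norm_sub_le_norm_sub_add_norm_sub y x z
  by_cases hxy : ε * r ≤ ‖x - y‖
  · have h1 := hUC.norm_half_smul_add_le_of_le_norm_sub hε hε2 hx hy hxy
    have h2 := norm_half_smul_add_le x z
    linarith
  · have h1 := hUC.norm_half_smul_add_le_of_le_norm_sub hε hε2 hx hz (by linarith)
    have h2 := norm_half_smul_add_le x y
    linarith

lemma IsUCModulus.sum_norm_half_smul_add_le (hUC : IsUCModulus E δ) {ε : ℝ} (hε : 0 < ε)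
    (hε2 : ε ≤ 2) (U W : E ≃ₗᵢ[ℝ] E) {ζ : E} {m N : ℕ} (hmN : m ≤ N)
    (hm : 2 * ε * ‖ζ‖ ≤ ‖ζ - (W ^ m) ζ‖) :
    ∑ b ∈ range (2 * N), ‖(2⁻¹ : ℝ) • (ζ + (U * W ^ b) ζ)‖ ≤ 2 * N * ((1 - δ ε / 4) * ‖ζ‖) := by
  set f : ℕ → ℝ := fun b ↦ ‖(2⁻¹ : ℝ) • (ζ + (U * W ^ b) ζ)‖
  have hpair (b : ℕ) : f b + f (b + m) ≤ (2 - δ ε) * ‖ζ‖ := by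
    refine hUC.norm_half_smul_add_add_norm_half_smul_add_le hε hε2 rfl
      ((U * W ^ b).norm_map ζ) ((U * W ^ (b + m)).norm_map ζ) (hm.trans_eq ?_)
    rw [pow_add, ← mul_assoc, LinearIsometryEquiv.coe_mul (U * W ^ b), Function.comp_apply,
      ← map_sub, LinearIsometryEquiv.norm_map]
  have hwindow := mul_le_two_mul_sum_range_of_le_add (g := fun b ↦ ‖ζ‖ - f b)
    (c := δ ε * ‖ζ‖) (fun b ↦ sub_nonneg.2 ((U * W ^ b).norm_half_smul_add_apply_le ζ)) hmN
    fun b _ ↦ by linarith [hpair b]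
  rw [sum_sub_distrib, sum_const, card_range, nsmul_eq_mul] at hwindow
  push_cast at hwindow
  linarith

end

theorem heisenberg_X0_Yn_Z0_inequality.{u}
    (δ₀ : ℝ → ℝ) (hδ₀ : ∀ ε : ℝ, 0 < ε → ε ≤ 2 → 0 < δ₀ ε ∧ δ₀ ε ≤ 1) :
    ∃ r₁ : ℝ, 0 ≤ r₁ ∧ r₁ < 1 ∧
      ∀ (E : Type u) [NormedAddCommGroup E] [NormedSpace ℝ E] [CompleteSpace E],
        IsUCModulus E δ₀ →
          ∀ U V W : E ≃ₗᵢ[ℝ] E, HeisenbergRel U V W →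
            ∀ n : ℕ, 2 ≤ n → ∀ ξ : E,
              ‖(((2⁻¹ : ℝ) • (1 + isomCLM U)) * avgOp V n *
                  (1 - (2⁻¹ : ℝ) • (1 + isomCLM W))) ξ‖ ≤
                max (r₁ * ‖(1 - (2⁻¹ : ℝ) • (1 + isomCLM W)) ξ‖)
                  ((2⁻¹ : ℝ) ^ (n - 2) * ‖ξ‖) := by
  obtain ⟨hδpos, hδle⟩ := hδ₀ 4⁻¹ (by norm_num) (by norm_num)
  refine ⟨1 - δ₀ 4⁻¹ / 4, by linarith, by linarith, ?_⟩
  intro E _ _ _ hUC U V W hH n hn ξ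
  obtain ⟨k, rfl⟩ : ∃ k, n = k + 2 := ⟨n - 2, by omega⟩
  have hζ := one_sub_half_smul_one_add_isomCLM_apply W ξ
  set ζ := (1 - (2⁻¹ : ℝ) • (1 + isomCLM W)) ξ
  rw [mul_apply_eq_comp, mul_apply_eq_comp, Nat.add_sub_cancel]
  refine (hH.norm_half_smul_one_add_isomCLM_avgOp_apply_le (k + 2) ζ).trans ?_
  rw [inv_mul_le_iff₀ (by positivity), show 2 ^ (k + 2) = 2 * 2 ^ (k + 1) from pow_succ' 2 _]
  by_cases hsmall : ‖ζ‖ ≤ (2⁻¹ : ℝ) ^ k * ‖ξ‖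
  · refine (sum_le_card_nsmul _ _ _ fun b _ ↦ (U * W ^ b).norm_half_smul_add_apply_le ζ).trans ?_
    rw [card_range, nsmul_eq_mul]
    push_cast
    rw [← pow_succ']
    exact mul_le_mul_of_nonneg_left (le_max_of_le_right hsmall) (by positivity)
  · have hN : 2 * ‖ξ‖ < (2 ^ (k + 1) : ℕ) * ‖ζ‖ :=
      calc 2 * ‖ξ‖ = (2 : ℝ) ^ (k + 1) * ((2⁻¹ : ℝ) ^ k * ‖ξ‖) := by
            rw [pow_succ, inv_pow]; field_simp
        _ < (2 ^ (k + 1) : ℕ) * ‖ζ‖ := by push_cast; gcongr; exact not_le.1 hsmall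
    obtain ⟨m, hm, hmζ⟩ := W.exists_half_norm_le_norm_sub_pow_apply hζ hN
    refine (hUC.sum_norm_half_smul_add_le (ε := 4⁻¹) (by norm_num) (by norm_num) U W hm.le
      (by linarith)).trans ?_
    push_cast
    rw [← pow_succ']
    exact mul_le_mul_of_nonneg_left (le_max_left _ _) (by positivity)
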